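/- Let p ∈ (0,1) and u ∈ [0,1). With q_Lap(y) = (ln(1/p)/(2(1-p)²))·(p^{|y|} - p^{2-|y|}) for |y| ≤ 1, the identity q_Lap(u) + p·q_Lap(1-u) = ((1+p)·ln(1/p)/(2(1-p)))·p^u holds. -/
import Mathlib

/-- The post-processing density turning discrete Laplace into continuous
Laplace noise. -/
noncomputable def qLap (p : ℝ) (y : ℝ) : ℝ :=
  if |y| ≤ 1 then
    Real.log (1 / p) / (2 * (1 - p) ^ 2) * (p ^ |y| - p ^ (2 - |y|))
  else 0

/-- Key algebraic identity: `q_Lap(u) + p·q_Lap(1-u) = ((1+p)ln(1/p)/(2(1-p)))·p^u`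
for `u ∈ [0,1)`. -/
theorem qLap_cell_identity
    (p : ℝ) (hp0 : 0 < p) (hp1 : p < 1) (u : ℝ) (hu0 : 0 ≤ u) (hu1 : u < 1) :
    qLap p u + p * qLap p (1 - u) =
      (1 + p) * Real.log (1 / p) / (2 * (1 - p)) * p ^ u := by
  have h1 : |u| = u := abs_of_nonneg hu0
  have h2 : |1 - u| = 1 - u := abs_of_nonneg (by linarith)
  rw [qLap, qLap, if_pos (by rw [h1]; linarith), if_pos (by rw [h2]; linarith), h1, h2]
  have e1 : (2 : ℝ) - (1 - u) = 1 + u := by ring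
  rw [e1]
  have e2 : p ^ (2 - u) = p * p ^ (1 - u) := by
    rw [show (2:ℝ) - u = 1 + (1 - u) by ring, Real.rpow_add hp0, Real.rpow_one]
  have e3 : p ^ (1 + u) = p * p ^ u := by
    rw [Real.rpow_add hp0, Real.rpow_one]
  rw [e2, e3]
  have hne : (1 : ℝ) - p ≠ 0 := by linarith
  field_simp
  ring
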